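/- arXiv:2108.02119 — 3 statements merged into one kernel-verified Lean document; each statement's English description precedes it below -/
import Mathlib

section
/- The DCT-IV matrix factors through the DCT-II: C^IV_N = A_N ⬝ C^II_N ⬝ D_N, where D_N = diag(2 cos((2n+1)π/(4N))) and A_N = J_N ⬝ tril(u_N ⬝ [√2/2, u_{N-1}ᵀ]) ⬝ J_N, i.e., [A_N]_{k,n} = (-1)^{k+n} t_{k,n} with t_{k,0} = √2/2 for k ≥ 0, t_{k,n} = 1 for 1 ≤ n ≤ k, and t_{k,n} = 0 for n > k. -/
open Real Matrix

noncomputable def dctII (N : Nat) : Matrix (Fin N) (Fin N) Real :=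
  Matrix.of fun k n => Real.sqrt (2 / N) *
    (if (k : Nat) = 0 then 1 / Real.sqrt 2 else 1) *
    Real.cos ((k : Nat) * (2 * (n : Nat) + 1) * Real.pi / (2 * N))

noncomputable def dctIV (N : Nat) : Matrix (Fin N) (Fin N) Real :=
  Matrix.of fun k n => Real.sqrt (2 / N) *
    Real.cos ((2 * (k : Nat) + 1) * (2 * (n : Nat) + 1) * Real.pi / (4 * N))

noncomputable def dstIV (N : Nat) : Matrix (Fin N) (Fin N) Real :=
  Matrix.of fun k n => Real.sqrt (2 / N) *
    Real.sin ((2 * (k : Nat) + 1) * (2 * (n : Nat) + 1) * Real.pi / (4 * N))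

def exI (N : Nat) : Matrix (Fin N) (Fin N) Real :=
  Matrix.of fun k n => if (k : Nat) + (n : Nat) = N - 1 then 1 else 0

def Jmat (N : Nat) : Matrix (Fin N) (Fin N) Real :=
  Matrix.diagonal fun n => (-1 : Real) ^ (n : Nat)

def pShuffle (N : Nat) : Matrix (Fin (2 * N)) (Fin (2 * N)) Real :=
  Matrix.of fun k n =>
    if (k : Nat) = (if (n : Nat) < N then 2 * (n : Nat) else (2 * (n : Nat)) % (2 * N) + 1)
    then 1 else 0

noncomputable def reix (N : Nat)
    (M : Matrix (Fin N ⊕ Fin N) (Fin N ⊕ Fin N) Real) :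
    Matrix (Fin (2 * N)) (Fin (2 * N)) Real :=
  Matrix.reindex (finSumFinEquiv.trans (finCongr (two_mul N).symm))
    (finSumFinEquiv.trans (finCongr (two_mul N).symm)) M

noncomputable def blk (N : Nat) (A B : Matrix (Fin N) (Fin N) Real) :
    Matrix (Fin (2 * N)) (Fin (2 * N)) Real :=
  reix N (Matrix.fromBlocks A 0 0 B)

noncomputable def butterfly (N : Nat) : Matrix (Fin (2 * N)) (Fin (2 * N)) Real :=
  reix N (Matrix.fromBlocks 1 (exI N) (exI N) (-1))

noncomputable def trilU (N : Nat) : Matrix (Fin N) (Fin N) Real :=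
  Matrix.of fun k n =>
    if (n : Nat) = 0 then Real.sqrt 2 / 2
    else if (n : Nat) ≤ (k : Nat) then 1 else 0

noncomputable def Amat (N : Nat) : Matrix (Fin N) (Fin N) Real :=
  Jmat N * trilU N * Jmat N

noncomputable def Dmat (N : Nat) : Matrix (Fin N) (Fin N) Real :=
  Matrix.diagonal fun n => 2 * Real.cos ((2 * (n : Nat) + 1) * Real.pi / (4 * N))

noncomputable def Gmat (N : Nat) : Matrix (Fin N) (Fin N) Real :=
  Matrix.diagonal fun n =>
    2 * (-1 : Real) ^ (n : Nat) * Real.cos ((2 * (n : Nat) + 1) * Real.pi / (4 * N))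

noncomputable def Bmat (N : Nat) : Matrix (Fin N) (Fin N) Real :=
  -(exI N * trilU N * Jmat N)

def bitrev (m j : Nat) : Nat :=
  (List.range m).foldl (fun acc i => 2 * acc + (if j.testBit i then 1 else 0)) 0

def Rmat (m : Nat) : Matrix (Fin (2 ^ m)) (Fin (2 ^ m)) Real :=
  Matrix.of fun i j => if (i : Nat) = bitrev m (j : Nat) then 1 else 0

/-!
Write `θ = (2n+1)π/(2N)`. Entry `(k, n)` of `A_N C^II_N` is, up to the factor `√(2/N) (-1)^k`,
the alternating cosine sum `1/2 - cos θ + cos 2θ - ⋯ + (-1)^k cos kθ`: the weight `√2/2` of `A_N` in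
column `0` cancels the `1/√2` normalisation of the DC row of `C^II_N`. Multiplying by
`2 cos(θ/2)` telescopes this sum, since `2 cos(θ/2) cos jθ = cos((2j+1)θ/2) + cos((2j-1)θ/2)`,
leaving `(-1)^k cos((2k+1)θ/2)`, which is the `(k, n)` entry of `C^IV_N` up to `√(2/N)`.
-/

open Finset

lemma two_mul_cos_half_mul_sum_range_neg_one_pow_mul_cos (θ : ℝ) (k : ℕ) :
    2 * cos (θ / 2) *
        ∑ j ∈ range (k + 1), (-1 : ℝ) ^ j * (if j = 0 then 1 / 2 else 1) * cos (j * θ) =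
      (-1 : ℝ) ^ k * cos ((2 * k + 1) * (θ / 2)) := by
  induction k with
  | zero => simp; ring
  | succ k ih =>
    have h := cos_add_cos ((2 * ((k : ℝ) + 1) + 1) * (θ / 2)) ((2 * (k : ℝ) + 1) * (θ / 2))
    have mean : ((2 * ((k : ℝ) + 1) + 1) * (θ / 2) + (2 * k + 1) * (θ / 2)) / 2 = (k + 1) * θ := by
      ring
    have half_diff : ((2 * ((k : ℝ) + 1) + 1) * (θ / 2) - (2 * k + 1) * (θ / 2)) / 2 = θ / 2 := by
      ring
    rw [mean, half_diff] at h
    rw [sum_range_succ, mul_add, ih, if_neg k.succ_ne_zero]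
    push_cast
    linear_combination (-1 : ℝ) ^ k * h

lemma Amat_apply (N : ℕ) (k n : Fin N) :
    Amat N k n = (-1 : ℝ) ^ ((k : ℕ) + (n : ℕ)) *
      (if (n : ℕ) = 0 then √2 / 2 else if (n : ℕ) ≤ (k : ℕ) then 1 else 0) := by
  simp only [Amat, Jmat, mul_diagonal, diagonal_mul, trilU, of_apply, pow_add]
  ring

lemma Amat_mul_dctII_apply (N : ℕ) (k n : Fin N) :
    (Amat N * dctII N) k n = √(2 / N) * (-1 : ℝ) ^ (k : ℕ) *
      ∑ j ∈ range (k + 1), (-1 : ℝ) ^ j * (if j = 0 then 1 / 2 else 1) *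
        cos (j * ((2 * (n : ℕ) + 1) * π / (2 * N))) := by
  set f : ℕ → ℝ := fun j => (-1 : ℝ) ^ j * (if j = 0 then 1 / 2 else 1) *
    cos (j * ((2 * (n : ℕ) + 1) * π / (2 * N)))
  have entry (j : Fin N) :
      Amat N k j * dctII N j n =
        √(2 / N) * (-1 : ℝ) ^ (k : ℕ) * if (j : ℕ) ≤ k then f j else 0 := by
    rw [Amat_apply, dctII, of_apply, pow_add, mul_assoc _ _ π, mul_div_assoc]
    by_cases hj : (j : ℕ) = 0
    · have hsqrt : √2 / 2 * (1 / √2) = 1 / 2 := by field_simp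
      simp only [f, hj, if_true, zero_le, Nat.cast_zero, zero_mul, pow_zero]
      linear_combination √(2 / N) * (-1 : ℝ) ^ (k : ℕ) * cos 0 * hsqrt
    · by_cases hjk : (j : ℕ) ≤ k
      · simp only [f, hj, hjk, if_true, if_false]
        ring
      · simp [hj, hjk]
  have truncate : ∑ j ∈ range N, (if j ≤ k then f j else 0) = ∑ j ∈ range (k + 1), f j := by
    rw [← sum_filter]
    congr 1
    ext j
    simp only [mem_filter, mem_range]
    omega
  rw [mul_apply, Fintype.sum_congr _ _ entry, ← mul_sum,
    Fin.sum_univ_eq_sum_range (fun j => if j ≤ (k : ℕ) then f j else 0), truncate]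

theorem dctIV_eq_A_dctII_D_general (N : Nat) :
    dctIV N = Amat N * dctII N * Dmat N ∧
    (∀ k n : Fin N, Amat N k n = (-1 : Real) ^ ((k : Nat) + (n : Nat)) *
      (if (n : Nat) = 0 then Real.sqrt 2 / 2
       else if (n : Nat) ≤ (k : Nat) then 1 else 0)) := by
  refine ⟨?_, Amat_apply N⟩
  ext k n
  set θ : ℝ := (2 * (n : ℕ) + 1) * π / (2 * N)
  have telescoped := two_mul_cos_half_mul_sum_range_neg_one_pow_mul_cos θ k
  have half_angle : (2 * (n : ℕ) + 1) * π / (4 * N) = θ / 2 := by ring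
  have kth_angle :
      (2 * (k : ℕ) + 1) * (θ / 2) = (2 * (k : ℕ) + 1) * (2 * (n : ℕ) + 1) * π / (4 * N) := by
    ring
  have sign_sq : (-1 : ℝ) ^ (k : ℕ) * (-1 : ℝ) ^ (k : ℕ) = 1 := by
    rw [← pow_add, Even.neg_one_pow ⟨k, rfl⟩]
  rw [kth_angle] at telescoped
  rw [Dmat, mul_diagonal, Amat_mul_dctII_apply, half_angle, dctIV, of_apply]
  linear_combination (-(√(2 / N) * (-1 : ℝ) ^ (k : ℕ))) * telescoped -
    √(2 / N) * cos ((2 * (k : ℕ) + 1) * (2 * (n : ℕ) + 1) * π / (4 * N)) * sign_sq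

theorem dctIV_eq_A_dctII_D (N : Nat) (hN : 0 < N) :
    dctIV N = Amat N * dctII N * Dmat N ∧
    (∀ k n : Fin N, Amat N k n = (-1 : Real) ^ ((k : Nat) + (n : Nat)) *
      (if (n : Nat) = 0 then Real.sqrt 2 / 2
       else if (n : Nat) ≤ (k : Nat) then 1 else 0)) :=
  dctIV_eq_A_dctII_D_general N
end

section
/- (Even-odd recursive decomposition of DCT-II) The 2N-point DCT-II matrix satisfies C^II_{2N} = (√2/2) ⬝ P_{2N} ⬝ blkdiag(C^II_N, J_N ⬝ S^IV_N) ⬝ [[I_N, Ī_N],[Ī_N, -I_N]], where P_{2N} is the perfect-shuffle permutation matrix sending input position n to output position 2n for n < N and to 2n mod 2N + 1 for n ≥ N. -/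
open Real Matrix

/-!
Index the rows of `C^II_{2N}` by the interleaving `2a, 2a + 1` and its columns by the halves
`n, N + n`. In these coordinates `P_{2N}` is the identity, the right-hand side is a `2 × 2` block
matrix, and each block is an elementary trigonometric identity: even rows halve the frequency of
the cosine; on the second half of the columns the angle is reflected about the multiple `aπ` of
the period, which is where `Ī_N` comes from; on odd rows `cos x = sin (π/2 - x)` turns the
`2N`-point cosine into the `N`-point DST-IV, with the shift by `aπ` producing the sign `(-1)^a`
of `J_N`.
-/

def finSumFinEquivTwoMul (N : ℕ) : Fin N ⊕ Fin N ≃ Fin (2 * N) :=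
  finSumFinEquiv.trans (finCongr (two_mul N).symm)

@[simp] lemma finSumFinEquivTwoMul_inl_val {N : ℕ} (a : Fin N) :
    (finSumFinEquivTwoMul N (.inl a) : ℕ) = a := rfl

@[simp] lemma finSumFinEquivTwoMul_inr_val {N : ℕ} (a : Fin N) :
    (finSumFinEquivTwoMul N (.inr a) : ℕ) = N + a := rfl

def interleaveEquiv (N : ℕ) : Fin N ⊕ Fin N ≃ Fin (2 * N) where
  toFun := Sum.elim (fun a => ⟨2 * a, by omega⟩) (fun a => ⟨2 * a + 1, by omega⟩)
  invFun k := if k.val % 2 = 0 then .inl ⟨k / 2, by omega⟩ else .inr ⟨k / 2, by omega⟩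
  left_inv := by
    rintro (a | a) <;> simp [Fin.ext_iff]
    omega
  right_inv k := by
    by_cases h : k.val % 2 = 0 <;> simp [h, Fin.ext_iff] <;> omega

@[simp] lemma interleaveEquiv_inl_val {N : ℕ} (a : Fin N) :
    (interleaveEquiv N (.inl a) : ℕ) = 2 * a := rfl

@[simp] lemma interleaveEquiv_inr_val {N : ℕ} (a : Fin N) :
    (interleaveEquiv N (.inr a) : ℕ) = 2 * a + 1 := rfl

lemma pShuffle_eq_reindex_one (N : ℕ) :
    pShuffle N = reindex (interleaveEquiv N) (finSumFinEquivTwoMul N) 1 := by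
  ext k n
  obtain ⟨i, rfl⟩ := (interleaveEquiv N).surjective k
  obtain ⟨j, rfl⟩ := (finSumFinEquivTwoMul N).surjective n
  rw [reindex_apply, submatrix_apply, Equiv.symm_apply_apply, Equiv.symm_apply_apply, one_apply,
    pShuffle, of_apply]
  rcases i with a | a <;> rcases j with b | b <;>
    simp [mul_add, Nat.mod_eq_of_lt, Fin.ext_iff] <;> omega

lemma reix_mul (N : ℕ) (M M' : Matrix (Fin N ⊕ Fin N) (Fin N ⊕ Fin N) ℝ) :
    reix N M * reix N M' = reix N (M * M') :=
  submatrix_mul_equiv _ _ _ _ _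

lemma pShuffle_mul_reix (N : ℕ) (M : Matrix (Fin N ⊕ Fin N) (Fin N ⊕ Fin N) ℝ) :
    pShuffle N * reix N M = reindex (interleaveEquiv N) (finSumFinEquivTwoMul N) M := by
  rw [pShuffle_eq_reindex_one, reix, ← finSumFinEquivTwoMul, reindex_apply, reindex_apply,
    reindex_apply, submatrix_mul_equiv, Matrix.one_mul]

lemma blk_mul_butterfly (N : ℕ) (A B : Matrix (Fin N) (Fin N) ℝ) :
    blk N A B * butterfly N = reix N (fromBlocks A (A * exI N) (B * exI N) (-B)) := by
  simp [blk, butterfly, reix_mul, fromBlocks_multiply]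

lemma exI_eq_submatrix_one (N : ℕ) :
    exI N = (1 : Matrix (Fin N) (Fin N) ℝ).submatrix id Fin.rev := by
  ext k n
  simp only [exI, of_apply, submatrix_apply, id, one_apply, Fin.ext_iff, Fin.val_rev]
  exact if_congr (by omega) rfl rfl

lemma mul_exI (N : ℕ) (M : Matrix (Fin N) (Fin N) ℝ) : M * exI N = M.submatrix id Fin.rev := by
  rw [exI_eq_submatrix_one, ← Equiv.coe_refl, mul_submatrix_one]
  rfl

lemma sqrt_two_div_two_mul (x : ℝ) : √(2 / (2 * x)) = √2 / 2 * √(2 / x) := by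
  rw [mul_comm, ← div_div, Real.sqrt_div' _ (by norm_num : (0:ℝ) ≤ 2), Real.sqrt_div_self',
    one_div_mul_eq_div]

section

variable {N : ℕ}

lemma dctII_two_mul_apply_even_low (a n : Fin N) :
    dctII (2 * N) (interleaveEquiv N (.inl a)) (finSumFinEquivTwoMul N (.inl n)) =
      √2 / 2 * dctII N a n := by
  simp only [dctII, of_apply, interleaveEquiv_inl_val, finSumFinEquivTwoMul_inl_val,
    Nat.mul_eq_zero, two_ne_zero, false_or]
  push_cast
  have hangle : 2 * (a : ℝ) * (2 * n + 1) * π / (2 * (2 * N)) = a * (2 * n + 1) * π / (2 * N) := by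
    ring
  rw [sqrt_two_div_two_mul, hangle]
  ring

lemma dctII_two_mul_apply_even_high (a n : Fin N) :
    dctII (2 * N) (interleaveEquiv N (.inl a)) (finSumFinEquivTwoMul N (.inr n)) =
      √2 / 2 * dctII N a n.rev := by
  have hN : (N : ℝ) ≠ 0 := by have := a.pos; positivity
  have hrev : ((n.rev : ℕ) : ℝ) = N - (n + 1) := by
    rw [Fin.val_rev, Nat.cast_sub (by omega)]; push_cast; ring
  simp only [dctII, of_apply, interleaveEquiv_inl_val, finSumFinEquivTwoMul_inr_val,
    Nat.mul_eq_zero, two_ne_zero, false_or]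
  push_cast
  set x := (a : ℝ) * (2 * n + 1) * π / (2 * N) with hx
  have hlhs : 2 * (a : ℝ) * (2 * (N + n) + 1) * π / (2 * (2 * N)) = x + a * π := by
    rw [hx]; field_simp; ring
  have hrhs : (a : ℝ) * (2 * (N - (n + 1)) + 1) * π / (2 * N) = a * π - x := by
    rw [hx]; field_simp; ring
  rw [sqrt_two_div_two_mul, hrev, hlhs, hrhs, cos_add_nat_mul_pi, cos_nat_mul_pi_sub]
  ring

lemma dctII_two_mul_apply_odd_low (a n : Fin N) :
    dctII (2 * N) (interleaveEquiv N (.inr a)) (finSumFinEquivTwoMul N (.inl n)) =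
      √2 / 2 * ((-1) ^ (a : ℕ) * dstIV N a n.rev) := by
  have hN : (N : ℝ) ≠ 0 := by have := a.pos; positivity
  have hrev : ((n.rev : ℕ) : ℝ) = N - (n + 1) := by
    rw [Fin.val_rev, Nat.cast_sub (by omega)]; push_cast; ring
  simp only [dctII, dstIV, of_apply, interleaveEquiv_inr_val, finSumFinEquivTwoMul_inl_val,
    Nat.add_one_ne_zero, if_false, mul_one]
  push_cast
  set x := (2 * a + 1 : ℝ) * (2 * n + 1) * π / (2 * (2 * N)) with hx
  have hrhs : (2 * a + 1 : ℝ) * (2 * (N - (n + 1)) + 1) * π / (4 * N) = π / 2 - x + a * π := by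
    rw [hx]; field_simp; ring
  have hsign : (-1 : ℝ) ^ (a : ℕ) * (-1) ^ (a : ℕ) = 1 := by rw [← mul_pow]; norm_num
  rw [sqrt_two_div_two_mul, hrev, hrhs, sin_add_nat_mul_pi, sin_pi_div_two_sub]
  linear_combination (-(√2 / 2 * √(2 / N) * cos x)) * hsign

lemma dctII_two_mul_apply_odd_high (a n : Fin N) :
    dctII (2 * N) (interleaveEquiv N (.inr a)) (finSumFinEquivTwoMul N (.inr n)) =
      -(√2 / 2 * ((-1) ^ (a : ℕ) * dstIV N a n)) := by
  have hN : (N : ℝ) ≠ 0 := by have := a.pos; positivity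
  simp only [dctII, dstIV, of_apply, interleaveEquiv_inr_val, finSumFinEquivTwoMul_inr_val,
    Nat.add_one_ne_zero, if_false, mul_one]
  push_cast
  set x := (2 * a + 1 : ℝ) * (2 * n + 1) * π / (4 * N) with hx
  have hlhs : (2 * a + 1 : ℝ) * (2 * (N + n) + 1) * π / (2 * (2 * N)) = x + π / 2 + a * π := by
    rw [hx]; field_simp; ring
  rw [sqrt_two_div_two_mul, hlhs, cos_add_nat_mul_pi, cos_add_pi_div_two]
  ring

lemma dctII_two_mul_eq_reindex_fromBlocks :
    dctII (2 * N) = (√2 / 2) • reindex (interleaveEquiv N) (finSumFinEquivTwoMul N)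
      (fromBlocks (dctII N) ((dctII N).submatrix id Fin.rev)
        ((Jmat N * dstIV N).submatrix id Fin.rev) (-(Jmat N * dstIV N))) := by
  ext k n
  obtain ⟨i, rfl⟩ := (interleaveEquiv N).surjective k
  obtain ⟨j, rfl⟩ := (finSumFinEquivTwoMul N).surjective n
  rcases i with a | a <;> rcases j with n | n <;>
    simp only [reindex_apply, submatrix_apply, Equiv.symm_apply_apply, Matrix.smul_apply,
      smul_eq_mul, fromBlocks_apply₁₁, fromBlocks_apply₁₂, fromBlocks_apply₂₁, fromBlocks_apply₂₂,
      Matrix.neg_apply, Jmat, diagonal_mul, id, dctII_two_mul_apply_even_low,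
      dctII_two_mul_apply_even_high, dctII_two_mul_apply_odd_low, dctII_two_mul_apply_odd_high,
      mul_neg]

end

theorem dctII_even_odd_decomposition_general (N : Nat) :
    dctII (2 * N) =
      (Real.sqrt 2 / 2) •
        (pShuffle N * blk N (dctII N) (Jmat N * dstIV N) * butterfly N) := by
  rw [Matrix.mul_assoc, blk_mul_butterfly, pShuffle_mul_reix, mul_exI, mul_exI]
  exact dctII_two_mul_eq_reindex_fromBlocks

theorem dctII_even_odd_decomposition (N : Nat) (hN : 0 < N) :
    dctII (2 * N) =
      (Real.sqrt 2 / 2) •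
        (pShuffle N * blk N (dctII N) (Jmat N * dstIV N) * butterfly N) :=
  dctII_even_odd_decomposition_general N
end

section
/- Let T_N be N×N real matrices and define T_{2N} by the JAM scaling: T_{2N} = P_{2N} ⬝ blkdiag(T_N, T_N) ⬝ [[I_N, Ī_N],[Ī_N, -I_N]]. If T_N ⬝ T_Nᵀ is diagonal, then T_{2N} ⬝ T_{2N}ᵀ is diagonal; in particular if T_N is orthogonal then (1/√2) T_{2N} is orthogonal. -/
open Real Matrix

/-
The butterfly `F = [[I, Ī], [Ī, -I]]` satisfies `F Fᵀ = 2 I`, because the exchange matrix `Ī` is a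
symmetric involution. Hence `T₂ₙ T₂ₙᵀ = 2 P (blkdiag(T, T) blkdiag(T, T)ᵀ) Pᵀ
= 2 P blkdiag(T Tᵀ, T Tᵀ) Pᵀ`, and conjugating by the permutation matrix `P` only permutes the
rows and columns, which keeps a diagonal matrix diagonal and fixes the identity.
-/

section Permutation

variable {n R : Type*} [Fintype n] [DecidableEq n] [NonAssocSemiring R]

theorem Matrix.permMatrix_mul_mul_transpose (σ : Equiv.Perm n) (A : Matrix n n R) :
    σ.permMatrix R * A * (σ.permMatrix R)ᵀ = A.submatrix σ σ := by
  rw [transpose_permMatrix, PEquiv.toMatrix_toPEquiv_mul, PEquiv.mul_toMatrix_toPEquiv,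
    submatrix_submatrix]
  rfl

end Permutation

theorem exI_eq_permMatrix (N : ℕ) : exI N = Fin.revPerm.permMatrix ℝ := by
  ext i j
  simp only [exI, of_apply, PEquiv.toMatrix_apply, Equiv.toPEquiv_apply, Option.mem_def,
    Option.some.injEq, Fin.revPerm_apply, Fin.ext_iff, Fin.val_rev]
  exact if_congr (by omega) rfl rfl

theorem exI_transpose (N : ℕ) : (exI N)ᵀ = exI N := by
  rw [exI_eq_permMatrix, transpose_permMatrix, Equiv.Perm.inv_def, Fin.revPerm_symm]

theorem exI_mul_self (N : ℕ) : exI N * exI N = 1 := by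
  rw [exI_eq_permMatrix, ← permMatrix_mul,
    show Fin.revPerm * Fin.revPerm = 1 from Equiv.ext Fin.rev_rev, permMatrix_one]

abbrev finSumFinTwoMul (N : ℕ) : Fin N ⊕ Fin N ≃ Fin (2 * N) :=
  finSumFinEquiv.trans (finCongr (two_mul N).symm)

theorem reix_eq_reindexAlgEquiv (N : ℕ) (M : Matrix (Fin N ⊕ Fin N) (Fin N ⊕ Fin N) ℝ) :
    reix N M = reindexAlgEquiv ℝ ℝ (finSumFinTwoMul N) M :=
  rfl

theorem reix_transpose (N : ℕ) (M : Matrix (Fin N ⊕ Fin N) (Fin N ⊕ Fin N) ℝ) :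
    (reix N M)ᵀ = reix N Mᵀ :=
  transpose_reindex _ _ M

theorem blk_one (N : ℕ) : blk N 1 1 = 1 := by
  rw [blk, fromBlocks_one, reix_eq_reindexAlgEquiv, map_one]

theorem Matrix.IsDiag.blk {N : ℕ} {A B : Matrix (Fin N) (Fin N) ℝ} (hA : A.IsDiag)
    (hB : B.IsDiag) :
    (blk N A B).IsDiag :=
  (hA.fromBlocks hB).submatrix (Equiv.injective _)

theorem blk_mul_transpose (N : ℕ) (A B : Matrix (Fin N) (Fin N) ℝ) :
    blk N A B * (blk N A B)ᵀ = blk N (A * Aᵀ) (B * Bᵀ) := by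
  rw [blk, blk, reix_transpose, reix_eq_reindexAlgEquiv, reix_eq_reindexAlgEquiv,
    reix_eq_reindexAlgEquiv, ← map_mul, fromBlocks_transpose, fromBlocks_multiply]
  simp

theorem butterfly_transpose (N : ℕ) : (butterfly N)ᵀ = butterfly N := by
  rw [butterfly, reix_transpose, fromBlocks_transpose, exI_transpose, transpose_one,
    transpose_neg, transpose_one]

theorem butterfly_mul_transpose (N : ℕ) : butterfly N * (butterfly N)ᵀ = (2 : ℝ) • 1 := by
  rw [butterfly_transpose, butterfly, reix_eq_reindexAlgEquiv, ← map_mul, fromBlocks_multiply,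
    exI_mul_self, ← map_one (reindexAlgEquiv ℝ ℝ (finSumFinTwoMul N)), ← map_smul,
    ← fromBlocks_one, fromBlocks_smul]
  congr 1
  simp [two_smul]

theorem two_mul_mod_two_mul {N n : ℕ} (h₁ : N ≤ n) (h₂ : n < 2 * N) :
    2 * n % (2 * N) = 2 * n - 2 * N := by
  rw [Nat.mod_eq_sub_mod (by omega), Nat.mod_eq_of_lt (by omega)]

def shuffle (N : ℕ) (n : Fin (2 * N)) : Fin (2 * N) :=
  ⟨if (n : ℕ) < N then 2 * n else 2 * n - 2 * N + 1, by split_ifs <;> omega⟩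

theorem shuffle_injective (N : ℕ) : Function.Injective (shuffle N) := by
  intro a b hab
  simp only [shuffle, Fin.mk.injEq] at hab
  ext
  split_ifs at hab <;> omega

noncomputable def shufflePerm (N : ℕ) : Equiv.Perm (Fin (2 * N)) :=
  Equiv.ofBijective (shuffle N) (Finite.injective_iff_bijective.1 (shuffle_injective N))

theorem pShuffle_eq_permMatrix (N : ℕ) :
    pShuffle N = Equiv.Perm.permMatrix ℝ (shufflePerm N).symm := by
  ext k n
  simp only [pShuffle, of_apply, PEquiv.toMatrix_apply, Equiv.toPEquiv_apply, Option.mem_def,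
    Option.some.injEq, Equiv.symm_apply_eq, shufflePerm, Equiv.ofBijective_apply, shuffle,
    Fin.ext_iff]
  refine if_congr ?_ rfl rfl
  split_ifs with h
  · rfl
  · rw [two_mul_mod_two_mul (not_lt.1 h) n.2]

theorem pShuffle_mul_mul_transpose (N : ℕ) (A : Matrix (Fin (2 * N)) (Fin (2 * N)) ℝ) :
    pShuffle N * A * (pShuffle N)ᵀ = A.submatrix (shufflePerm N).symm (shufflePerm N).symm := by
  rw [pShuffle_eq_permMatrix, permMatrix_mul_mul_transpose]

theorem pShuffle_mul_transpose (N : ℕ) : pShuffle N * (pShuffle N)ᵀ = 1 := by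
  simpa using pShuffle_mul_mul_transpose N 1

theorem pShuffle_blk_butterfly_mul_transpose (N : ℕ) (A B : Matrix (Fin N) (Fin N) ℝ) :
    pShuffle N * blk N A B * butterfly N * (pShuffle N * blk N A B * butterfly N)ᵀ =
      (2 : ℝ) • (pShuffle N * blk N (A * Aᵀ) (B * Bᵀ) * (pShuffle N)ᵀ) := by
  calc _ = pShuffle N * blk N A B * (butterfly N * (butterfly N)ᵀ) * (blk N A B)ᵀ *
        (pShuffle N)ᵀ := by simp only [transpose_mul, Matrix.mul_assoc]
    _ = (2 : ℝ) • (pShuffle N * (blk N A B * (blk N A B)ᵀ) * (pShuffle N)ᵀ) := by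
        rw [butterfly_mul_transpose, Matrix.mul_smul, Matrix.mul_one, smul_mul_assoc,
          smul_mul_assoc]
        simp only [Matrix.mul_assoc]
    _ = _ := by rw [blk_mul_transpose]

theorem jam_scaling_orthogonality {N : Nat}
    (T : Matrix (Fin N) (Fin N) Real) :
    ((T * Tᵀ).IsDiag →
      ((pShuffle N * blk N T T * butterfly N) *
        (pShuffle N * blk N T T * butterfly N)ᵀ).IsDiag) ∧
    (T * Tᵀ = 1 →
      ((1 / Real.sqrt 2) • (pShuffle N * blk N T T * butterfly N)) *
        ((1 / Real.sqrt 2) • (pShuffle N * blk N T T * butterfly N))ᵀ = 1) := by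
  refine ⟨fun h ↦ ?_, fun h ↦ ?_⟩
  · rw [pShuffle_blk_butterfly_mul_transpose, pShuffle_mul_mul_transpose]
    exact ((h.blk h).submatrix (Equiv.injective _)).smul (2 : ℝ)
  · rw [transpose_smul, smul_mul_smul_comm, pShuffle_blk_butterfly_mul_transpose, h, blk_one,
      Matrix.mul_one, pShuffle_mul_transpose, smul_smul]
    have hc : 1 / √2 * (1 / √2) * 2 = (1 : ℝ) := by field_simp; norm_num
    rw [hc, one_smul]
end
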